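/- arXiv:0909.2068 — 3 statements merged into one kernel-verified Lean document; each statement's English description precedes it below -/
import Mathlib

section
/- Let A be a ring and suppose V is a left A-module that is an internal direct sum of a family of simple submodules (Vᵢ)_{i∈I} and also an internal direct sum of a family of simple submodules (Wⱼ)_{j∈J}. Then there is a bijection σ : I → J such that Vᵢ is isomorphic as an A-module to W_{σ(i)} for every i ∈ I. -/
/-!
For a simple module `S`, the module `Hom_A(S, V)` is free over the division ring `End_A(S)`
acting by precomposition, with a basis indexed by the summands isomorphic to `S`: a map out of
the cyclic module `S` lands in finitely many summands, and by Schur's lemma each nonzero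
component `S → Vᵢ` is an isomorphism. By invariance of basis number, the number of `Vᵢ` and of
`Wⱼ` isomorphic to `S` therefore agree, and the bijection is assembled over the isotypic
components.
-/

theorem exists_equiv_of_fiber_equiv {I J C : Type*} {f : I → C} {g : J → C}
    (hI : ∀ i, Nonempty ({i' // f i' = f i} ≃ {j // g j = f i}))
    (hJ : ∀ j, Nonempty ({i // f i = g j} ≃ {j' // g j' = g j})) :
    ∃ σ : I ≃ J, ∀ i, g (σ i) = f i := by
  have fiber (c : C) : Nonempty ({i // f i = c} ≃ {j // g j = c}) := by
    by_cases hf : ∃ i, f i = c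
    · obtain ⟨i, rfl⟩ := hf
      exact hI i
    by_cases hg : ∃ j, g j = c
    · obtain ⟨j, rfl⟩ := hg
      exact hJ j
    push Not at hf hg
    have : IsEmpty {i // f i = c} := ⟨fun i ↦ hf i i.2⟩
    have : IsEmpty {j // g j = c} := ⟨fun j ↦ hg j j.2⟩
    exact ⟨Equiv.equivOfIsEmpty _ _⟩
  exact ⟨Equiv.ofFiberEquiv fun c ↦ (fiber c).some, Equiv.ofFiberEquiv_map _⟩

theorem isotypicComponent_eq_isotypicComponent_iff {R M : Type*} [Ring R] [AddCommGroup M]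
    [Module R M] {N N' : Submodule R M} [IsSimpleModule R N] [IsSimpleModule R N'] :
    isotypicComponent R M N = isotypicComponent R M N' ↔ Nonempty (N ≃ₗ[R] N') := by
  refine ⟨fun h ↦ ?_, fun ⟨e⟩ ↦ e.isotypicComponent_eq⟩
  exact isIsotypicOfType_submodule_iff.mp (.isotypicComponent R M N') N
    (h ▸ N.le_isotypicComponent)

instance Module.End.invariantBasisNumber_domMulAct {A S : Type*} [Ring A] [AddCommGroup S]
    [Module A S] [IsSimpleModule A S] :
    InvariantBasisNumber (Module.End A S)ᵈᵐᵃ := by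
  classical
  let _ : DivisionRing (Module.End A S) := Module.End.instDivisionRing
  exact inferInstanceAs (InvariantBasisNumber (Module.End A S)ᵐᵒᵖ)

namespace DirectSum.Decomposition

variable {A ι V S : Type*} [Ring A] [AddCommGroup V] [Module A V] [AddCommGroup S] [Module A S]
  [DecidableEq ι] (ℳ : ι → Submodule A V) [Decomposition ℳ]

def component (i : ι) : V →ₗ[A] ℳ i :=
  DirectSum.component A ι (fun i ↦ ℳ i) i ∘ₗ (decomposeLinearEquiv ℳ).toLinearMap

@[simp]
theorem component_apply (i : ι) (x : V) : component ℳ i x = decompose ℳ x i := rfl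

theorem exists_finset_linearMap_eq_sum_component (f : S →ₗ[A] V) {x : S} (hx : A ∙ x = ⊤) :
    ∃ T : Finset ι, f = ∑ i ∈ T, (ℳ i).subtype ∘ₗ component ℳ i ∘ₗ f := by
  classical
  refine ⟨(decompose ℳ (f x)).support, LinearMap.ext_on hx (Set.eqOn_singleton.mpr ?_)⟩
  simp only [LinearMap.sum_apply, LinearMap.comp_apply, component_apply,
    Submodule.subtype_apply]
  exact (sum_support_decompose ℳ (f x)).symm

theorem component_of_mem_same {i : ι} {x : V} (hx : x ∈ ℳ i) : (component ℳ i x : V) = x :=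
  decompose_of_mem_same ℳ hx

theorem component_of_mem_ne {i j : ι} {x : V} (hx : x ∈ ℳ i) (hij : i ≠ j) :
    component ℳ j x = 0 :=
  Subtype.ext (decompose_of_mem_ne ℳ hx hij)

open Function in
theorem linearIndependent_subtype_comp {K : Type*} {κ : K → ι} (hκ : Injective κ)
    {e : ∀ k, S →ₗ[A] ℳ (κ k)} (he : ∀ k, Injective (e k)) :
    LinearIndependent (Module.End A S)ᵈᵐᵃ (fun k ↦ (ℳ (κ k)).subtype ∘ₗ e k) := by
  rw [linearIndependent_iff']
  intro t g hsum k₀ hk₀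
  suffices DomMulAct.mk.symm (g k₀) = 0 from DomMulAct.mk.symm.injective this
  ext s
  have hcomp := congrArg (fun f : S →ₗ[A] V ↦ (component ℳ (κ k₀) (f s) : V)) hsum
  simp only [LinearMap.sum_apply, map_sum, DomMulAct.smul_linearMap_apply, LinearMap.comp_apply,
    Module.End.smul_def, Submodule.subtype_apply, LinearMap.zero_apply, map_zero] at hcomp
  rw [Finset.sum_eq_single_of_mem k₀ hk₀ fun k _ hk ↦ component_of_mem_ne ℳ (e k _).2 (hκ.ne hk),
    component_of_mem_same ℳ (e k₀ _).2] at hcomp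
  exact (he k₀) (Subtype.ext (hcomp.trans (by simp)))

variable [IsSimpleModule A S] [∀ i, IsSimpleModule A (ℳ i)]

theorem top_le_span_range_subtype_comp_symm :
    ⊤ ≤ Submodule.span (Module.End A S)ᵈᵐᵃ (Set.range fun k : {i // Nonempty (ℳ i ≃ₗ[A] S)} ↦
      (ℳ k.1).subtype ∘ₗ (Classical.choice k.2).symm.toLinearMap) := by
  rintro f -
  have := IsSimpleModule.nontrivial A S
  obtain ⟨x, hx⟩ := exists_ne (0 : S)
  obtain ⟨T, hT⟩ := exists_finset_linearMap_eq_sum_component ℳ f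
    (IsSimpleModule.span_singleton_eq_top A hx)
  rw [hT]
  refine Submodule.sum_mem _ fun i _ ↦ ?_
  obtain hf | hf := eq_or_ne (component ℳ i ∘ₗ f) 0
  · simp [hf]
  let k : {i // Nonempty (ℳ i ≃ₗ[A] S)} :=
    ⟨i, ⟨(LinearEquiv.ofBijective _ (LinearMap.bijective_of_ne_zero hf)).symm⟩⟩
  have hk : (ℳ i).subtype ∘ₗ component ℳ i ∘ₗ f = DomMulAct.mk
      ((Classical.choice k.2).toLinearMap ∘ₗ component ℳ i ∘ₗ f) •
        ((ℳ k.1).subtype ∘ₗ (Classical.choice k.2).symm.toLinearMap) := by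
    ext s
    simp
  rw [hk]
  exact Submodule.smul_mem _ _ (Submodule.subset_span ⟨k, rfl⟩)

variable (S) in
noncomputable def linearMapBasis :
    Module.Basis {i // Nonempty (ℳ i ≃ₗ[A] S)} (Module.End A S)ᵈᵐᵃ (S →ₗ[A] V) :=
  .mk (linearIndependent_subtype_comp ℳ Subtype.val_injective
    fun k ↦ (Classical.choice k.2).symm.injective) (top_le_span_range_subtype_comp_symm ℳ)

end DirectSum.Decomposition

theorem DirectSum.IsInternal.nonempty_equiv_of_isSimpleModule {A V S ι κ : Type*} [Ring A]
    [AddCommGroup V] [Module A V] [AddCommGroup S] [Module A S] [IsSimpleModule A S]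
    [DecidableEq ι] [DecidableEq κ] {Vi : ι → Submodule A V} {Wj : κ → Submodule A V}
    [∀ i, IsSimpleModule A (Vi i)] [∀ j, IsSimpleModule A (Wj j)]
    (hVi : IsInternal Vi) (hWj : IsInternal Wj) :
    Nonempty ({i // Nonempty (Vi i ≃ₗ[A] S)} ≃ {j // Nonempty (Wj j ≃ₗ[A] S)}) :=
  let _ := hVi.chooseDecomposition
  let _ := hWj.chooseDecomposition
  ⟨(Decomposition.linearMapBasis S Vi).indexEquiv (Decomposition.linearMapBasis S Wj)⟩

/-- If `V` is an internal direct sum of simple submodules `(Vᵢ)` and also of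
simple submodules `(Wⱼ)`, there is a bijection `σ : I ≃ J` with `Vᵢ ≅ W_{σ i}`. -/
theorem internal_direct_sum_simple_unique {A V : Type*} [Ring A] [AddCommGroup V]
    [Module A V] {I J : Type*} [DecidableEq I] [DecidableEq J] (Vi : I → Submodule A V) (Wj : J → Submodule A V)
    (hVi : DirectSum.IsInternal Vi) (hWj : DirectSum.IsInternal Wj)
    (hViS : ∀ i, IsSimpleModule A (Vi i)) (hWjS : ∀ j, IsSimpleModule A (Wj j)) :
    ∃ σ : I ≃ J, ∀ i, Nonempty (↥(Vi i) ≃ₗ[A] ↥(Wj (σ i))) := by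
  have := hViS
  have := hWjS
  have fiber_equiv (N : Submodule A V) [IsSimpleModule A N] :
      Nonempty ({i // isotypicComponent A V (Vi i) = isotypicComponent A V N} ≃
        {j // isotypicComponent A V (Wj j) = isotypicComponent A V N}) := by
    simp only [isotypicComponent_eq_isotypicComponent_iff]
    exact hVi.nonempty_equiv_of_isSimpleModule hWj
  obtain ⟨σ, hσ⟩ :=
    exists_equiv_of_fiber_equiv (fun i ↦ fiber_equiv (Vi i)) (fun j ↦ fiber_equiv (Wj j))
  exact ⟨σ, fun i ↦ isotypicComponent_eq_isotypicComponent_iff.mp (hσ i).symm⟩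
end

section
/- Let A be a ring and U a simple left A-module. For index sets I and J, the direct sums ⊕_{i∈I} U and ⊕_{j∈J} U are isomorphic as A-modules if and only if I and J have the same cardinality. -/
/-!
By Schur's lemma `D = End_A(U)` is a division ring, and `Hom_A(U, ⊕_I U)` is a right
`D`-vector space (by precomposition, i.e. a `Dᵈᵐᵃ`-module) with basis the coordinate
inclusions `U → ⊕_I U`: a map out of the simple module `U` is injective or zero on each
coordinate, so it only hits the finitely many coordinates where its value at a fixed `u ≠ 0`
is nonzero. An `A`-isomorphism `⊕_I U ≃ ⊕_J U` induces a `D`-isomorphism of these vector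
spaces, and division rings have invariant basis number.
-/

open DirectSum

universe u

noncomputable instance DomMulAct.instDivisionRing {R : Type*} [DivisionRing R] :
    DivisionRing Rᵈᵐᵃ :=
  inferInstanceAs (DivisionRing Rᵐᵒᵖ)

section

variable {A U : Type*} [Ring A] [AddCommGroup U] [Module A U]

theorem IsSimpleModule.support_apply_subset [IsSimpleModule A U] {ι : Type*} [DecidableEq ι]
    {M : ι → Type*} [∀ i, AddCommGroup (M i)] [∀ i, Module A (M i)]
    [∀ i (m : M i), Decidable (m ≠ 0)] (g : U →ₗ[A] ⨁ i, M i) {u : U} (hu : u ≠ 0)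
    (x : U) :
    (g x).support ⊆ (g u).support := by
  intro i hi
  rw [DFinsupp.mem_support_iff] at hi ⊢
  intro hgu
  rcases (component A ι M i ∘ₗ g).injective_or_eq_zero with hinj | hzero
  · exact hu (hinj (by rw [LinearMap.comp_apply, map_zero]; exact hgu))
  · exact hi (LinearMap.congr_fun hzero x)

variable (A U)

theorem linearIndependent_lof_domMulAct (I : Type*) [DecidableEq I] :
    LinearIndependent (Module.End A U)ᵈᵐᵃ (lof A I (fun _ => U)) := by
  rw [linearIndependent_iff]
  intro c hc
  ext i : 1
  by_cases hci : c i = 0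
  · exact hci
  apply DomMulAct.mk.symm.injective
  ext x
  change _ = (0 : U)
  simpa [Finsupp.linearCombination_apply, Finsupp.sum, DomMulAct.smul_linearMap_apply,
    ← single_eq_lof, DFinsupp.finsetSum_apply, DFinsupp.single_apply, hci] using congr($hc x i)

theorem top_le_span_range_lof_domMulAct [IsSimpleModule A U] (I : Type*) [DecidableEq I] :
    ⊤ ≤ Submodule.span (Module.End A U)ᵈᵐᵃ (Set.range (lof A I (fun _ => U))) := by
  classical
  intro g _
  have := IsSimpleModule.nontrivial A U
  obtain ⟨u, hu⟩ := exists_ne (0 : U)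
  have hg : g = ∑ i ∈ (g u).support,
      DomMulAct.mk (component A I (fun _ => U) i ∘ₗ g) • lof A I (fun _ => U) i := by
    ext x : 1
    rw [LinearMap.sum_apply]
    simp only [DomMulAct.mk_smul_linearMap_apply]
    conv_lhs => rw [← DFinsupp.sum_single (f := g x)]
    rw [DFinsupp.sum_of_support_subset (IsSimpleModule.support_apply_subset g hu x)
      (fun _ _ => DFinsupp.single_zero _)]
    rfl
  rw [hg]
  exact Submodule.sum_mem _ fun i _ => Submodule.smul_mem _ _ (Submodule.subset_span ⟨i, rfl⟩)

noncomputable def basisLofDomMulAct [IsSimpleModule A U] (I : Type*) [DecidableEq I] :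
    Module.Basis I (Module.End A U)ᵈᵐᵃ (U →ₗ[A] ⨁ _ : I, U) :=
  .mk (linearIndependent_lof_domMulAct A U I) (top_le_span_range_lof_domMulAct A U I)

end

/-- For a simple module `U`, the direct sums `⊕_{i∈I} U` and `⊕_{j∈J} U` are
isomorphic iff `I` and `J` have the same cardinality. -/
theorem directSum_copies_iso_iff {A U : Type*} [Ring A] [AddCommGroup U] [Module A U]
    (hU : IsSimpleModule A U) (I J : Type u) :
    Nonempty ((⨁ _ : I, U) ≃ₗ[A] (⨁ _ : J, U)) ↔ Cardinal.mk I = Cardinal.mk J := by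
  classical
  constructor
  · rintro ⟨e⟩
    exact mk_eq_mk_of_basis' ((basisLofDomMulAct A U I).map e.domMulActCongrRight)
      (basisLofDomMulAct A U J)
  · intro h
    obtain ⟨f⟩ := Cardinal.eq.mp h
    exact ⟨lequivCongrLeft A f⟩
end

section
/- Let A be a ring, V a left A-module, and (V_α)_{α < n} a family of simple submodules of V indexed by ordinals below n such that V is the internal direct sum of the V_α. Then the chain W_i = ⨆_{α < i} V_α (for i ≤ n) is a transfinite composition series: it is strictly increasing, starts at ⊥, ends at ⊤, takes suprema at limit ordinals, and each quotient W_{i+1}/W_i is a simple A-module (isomorphic to V_i). -/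
/-- For a family of submodules `(Vα)_{α<n}` of `V` indexed by ordinals below
`n`, the submodule `⨆_{α < i} Vα`. -/
def supBelow {A V : Type*} [Ring A] [AddCommGroup V] [Module A V] {n : Ordinal}
    (Vα : {α : Ordinal // α < n} → Submodule A V) (i : Ordinal) : Submodule A V :=
  ⨆ α : {α : Ordinal // α < n}, ⨆ _ : (α : Ordinal) < i, Vα α

/-!
Write `W i = ⨆_{α<i} Vα`. Independence makes `Vα i` disjoint from `W i`, while
`W (i+1) = Vα i ⊔ W i`; the second isomorphism theorem then identifies
`W (i+1) / W i` with `Vα i`. Since every `Vα i` is nonzero and lies in `W j` for `i < j`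
but not in `W i`, the chain is strictly increasing.
-/

namespace Submodule

variable {R M : Type*} [Ring R] [AddCommGroup M] [Module R M]

noncomputable def supQuotientEquivOfDisjoint {p q : Submodule R M} (h : Disjoint p q) :
    (↥(p ⊔ q) ⧸ comap (p ⊔ q).subtype q) ≃ₗ[R] p :=
  (LinearMap.quotientInfEquivSupQuotient p q).symm.trans
    (quotEquivOfEqBot _ (by rw [← comap_inf, h.eq_bot, comap_bot, ker_subtype]))

end Submodule

section supBelow

variable {A V : Type*} [Ring A] [AddCommGroup V] [Module A V] {n : Ordinal}
    (Vα : {α : Ordinal // α < n} → Submodule A V)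

theorem supBelow_mono : Monotone (supBelow Vα) := fun _ _ hij =>
  iSup_mono fun _ => iSup_mono' fun h => ⟨h.trans_le hij, le_rfl⟩

theorem le_supBelow {i : Ordinal} (α : {α : Ordinal // α < n}) (h : (α : Ordinal) < i) :
    Vα α ≤ supBelow Vα i :=
  le_iSup₂_of_le α h le_rfl

theorem supBelow_zero : supBelow Vα 0 = ⊥ := by
  simp [supBelow]

theorem supBelow_self : supBelow Vα n = ⨆ α, Vα α :=
  iSup_congr fun α => iSup_pos α.2

theorem supBelow_of_isSuccLimit {lam : Ordinal} (hlim : Order.IsSuccLimit lam) :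
    supBelow Vα lam = ⨆ i < lam, supBelow Vα i :=
  le_antisymm
    (iSup_le fun α => iSup_le fun hα => le_iSup₂_of_le _ (hlim.add_one_lt hα)
      (le_supBelow Vα α (lt_add_one _)))
    (iSup₂_le fun _ hi => supBelow_mono Vα hi.le)

theorem supBelow_add_one {i : Ordinal} (hi : i < n) :
    supBelow Vα (i + 1) = Vα ⟨i, hi⟩ ⊔ supBelow Vα i := by
  refine le_antisymm (iSup₂_le fun α hα => ?_)
    (sup_le (le_supBelow Vα _ (lt_add_one _))
      (supBelow_mono Vα (lt_add_one _).le))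
  rcases (Order.lt_add_one_iff.mp hα).lt_or_eq with h | rfl
  · exact le_sup_of_le_right (le_supBelow Vα α h)
  · exact le_sup_left

theorem disjoint_supBelow (hind : iSupIndep Vα) {i : Ordinal} (hi : i < n) :
    Disjoint (Vα ⟨i, hi⟩) (supBelow Vα i) :=
  hind.disjoint_biSup (y := {α | (α : Ordinal) < i}) (lt_irrefl i)

theorem strictMonoOn_supBelow (hind : iSupIndep Vα) (hne : ∀ α, Vα α ≠ ⊥) :
    StrictMonoOn (supBelow Vα) (Set.Iic n) := by
  intro i _ j hj hij
  have hi : i < n := hij.trans_le hj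
  refine (supBelow_mono Vα hij.le).lt_of_ne fun heq => hne ⟨i, hi⟩ ?_
  exact (disjoint_supBelow Vα hind hi).eq_bot_of_le (heq ▸ le_supBelow Vα ⟨i, hi⟩ hij)

noncomputable def supBelowQuotientEquiv (hind : iSupIndep Vα) {i : Ordinal} (hi : i < n) :
    (↥(supBelow Vα (i + 1)) ⧸
      Submodule.comap (supBelow Vα (i + 1)).subtype (supBelow Vα i)) ≃ₗ[A] Vα ⟨i, hi⟩ :=
  supBelow_add_one Vα hi ▸ Submodule.supQuotientEquivOfDisjoint (disjoint_supBelow Vα hind hi)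

end supBelow

/-- If `V` is the internal direct sum of simple submodules `(Vα)_{α<n}`, the
chain `W i = ⨆_{α<i} Vα` is a transfinite composition series: strictly
increasing on `Iic n`, from `⊥` to `⊤`, taking suprema at limit ordinals, with
every factor `W (i+1) / W i` simple and isomorphic to `Vα i`. -/
theorem supBelow_transfinite_composition_series {A V : Type*} [Ring A]
    [AddCommGroup V] [Module A V] {n : Ordinal}
    (Vα : {α : Ordinal // α < n} → Submodule A V)
    (hint : DirectSum.IsInternal Vα)
    (hsimple : ∀ α, IsSimpleModule A (Vα α)) :
    StrictMonoOn (supBelow Vα) (Set.Iic n) ∧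
    supBelow Vα 0 = ⊥ ∧
    supBelow Vα n = ⊤ ∧
    (∀ lam ≤ n, Order.IsSuccLimit lam →
      supBelow Vα lam = ⨆ i < lam, supBelow Vα i) ∧
    (∀ (i : Ordinal) (hi : i < n),
      IsSimpleModule A
        (↥(supBelow Vα (i + 1)) ⧸
          Submodule.comap (supBelow Vα (i + 1)).subtype (supBelow Vα i)) ∧
      Nonempty
        ((↥(supBelow Vα (i + 1)) ⧸
            Submodule.comap (supBelow Vα (i + 1)).subtype (supBelow Vα i))
          ≃ₗ[A] ↥(Vα ⟨i, hi⟩))) := by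
  have hind := hint.submodule_iSupIndep
  have hne (α) : Vα α ≠ ⊥ :=
    Submodule.nontrivial_iff_ne_bot.mp (IsSimpleModule.nontrivial A (Vα α))
  refine ⟨strictMonoOn_supBelow Vα hind hne, supBelow_zero Vα,
    (supBelow_self Vα).trans hint.submodule_iSup_eq_top,
    fun _ _ hlim => supBelow_of_isSuccLimit Vα hlim, fun i hi => ?_⟩
  let e := supBelowQuotientEquiv Vα hind hi
  exact ⟨(hsimple ⟨i, hi⟩).congr e, ⟨e⟩⟩
end
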